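/- arXiv:1802.09478 — 3 statements merged into one kernel-verified Lean document; each statement's English description precedes it below -/
import Mathlib

section
/- Let G = (V, E) be a finite undirected graph without isolated vertices, and let h : V → [0,1] be a family of i.i.d. uniform random variables (almost surely injective). Define the representative of each vertex v as r(v) = argmin over w in the closed neighbourhood N[v] of h(w). Then the expected number of vertices in the image of r is at most (3/4)|V|. -/
/-!
A vertex `v` is some vertex's representative only if, for some `w ∈ N[v]`, no `u ∈ N[w] \ {v}`
has a smaller label than `v`. For fixed `v`, each event "some `u ∈ N[w] \ {v}` beats `v`" has
probability `d(w)/(d(w)+1)` and is increasing in `h v` and decreasing in the other labels, so by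
the Harris inequality these events are positively correlated, and `v` is a representative with
probability at most `1 - p v`, where `p v = ∏_{w ∈ N[v]} d(w)/(d(w)+1)`. Double counting gives
`∏_v p v = ∏_w (d(w)/(d(w)+1))^(d(w)+1) ≥ 4^(-|V|)` since every degree is positive, and AM-GM
turns this into `∑_v p v ≥ |V|/4`. The Harris inequality itself follows from the
one-dimensional Chebyshev inequality by integrating out one coordinate at a time.
-/

open MeasureTheory Finset Function
open scoped ENNReal

local notation "𝕌" => volume.restrict (Set.Icc (0 : ℝ) 1)

section Chebyshev

theorem ENNReal.mul_add_mul_le_mul_add_mul {a b c d : ℝ≥0∞} (hab : a ≤ b) (hcd : c ≤ d) :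
    a * d + b * c ≤ a * c + b * d := by
  obtain ⟨b, rfl⟩ := exists_add_of_le hab
  obtain ⟨d, rfl⟩ := exists_add_of_le hcd
  calc a * (c + d) + (a + b) * c = a * c + (a * c + a * d + b * c) := by ring
    _ ≤ a * c + (a * c + a * d + b * c) + b * d := le_self_add
    _ = a * c + (a + b) * (c + d) := by ring

variable {Ω : Type*} {F G : Ω → ℝ≥0∞}

theorem Monovary.ennreal_mul_add_mul_le (h : Monovary F G) (a b : Ω) :
    F a * G b + F b * G a ≤ F a * G a + F b * G b := by
  wlog hab : G a ≤ G b generalizing a b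
  · simpa only [add_comm] using this b a (le_of_not_ge hab)
  rcases hab.lt_or_eq with hlt | heq
  · exact ENNReal.mul_add_mul_le_mul_add_mul (h hlt) hab
  · rw [heq]

variable [MeasurableSpace Ω] {μ : Measure Ω} [IsProbabilityMeasure μ]

theorem Monovary.lintegral_mul_lintegral_le (h : Monovary F G) (hF : Measurable F)
    (hG : Measurable G) : (∫⁻ x, F x ∂μ) * ∫⁻ x, G x ∂μ ≤ ∫⁻ x, F x * G x ∂μ := by
  have hmixed : ∫⁻ a, ∫⁻ b, (F a * G b + F b * G a) ∂μ ∂μ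
      = 2 * ((∫⁻ x, F x ∂μ) * ∫⁻ x, G x ∂μ) := by
    simp_rw [lintegral_add_left (hG.const_mul _), lintegral_const_mul _ hG,
      lintegral_mul_const _ hF]
    rw [lintegral_add_left (hF.mul_const _), lintegral_mul_const _ hF, lintegral_const_mul _ hG]
    ring
  have hdiag : ∫⁻ a, ∫⁻ b, (F a * G a + F b * G b) ∂μ ∂μ = 2 * ∫⁻ x, F x * G x ∂μ := by
    simp_rw [lintegral_add_left measurable_const, lintegral_const, measure_univ, mul_one]
    rw [lintegral_add_right _ measurable_const, lintegral_const, measure_univ, mul_one, two_mul]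
  refine (ENNReal.mul_le_mul_iff_right two_ne_zero ENNReal.ofNat_ne_top).mp ?_
  rw [← hmixed, ← hdiag]
  exact lintegral_mono fun a => lintegral_mono fun b => h.ennreal_mul_add_mul_le a b

end Chebyshev

section Harris

variable {ι α : Type*} [LinearOrder α] {v : ι}

def MixedMonotone (v : ι) (f : (ι → α) → ℝ≥0∞) : Prop :=
  ∀ ⦃x y : ι → α⦄, x v ≤ y v → (∀ u ≠ v, y u ≤ x u) → f x ≤ f y

namespace MixedMonotone

variable {f g : (ι → α) → ℝ≥0∞}

theorem finsetProd {κ : Type*} (T : Finset κ) {f : κ → (ι → α) → ℝ≥0∞}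
    (hf : ∀ k ∈ T, MixedMonotone v (f k)) : MixedMonotone v fun x => ∏ k ∈ T, f k x :=
  fun _ _ hv hu => Finset.prod_le_prod' fun k hk => hf k hk hv hu

variable [DecidableEq ι]

theorem monovary_update (hf : MixedMonotone v f) (hg : MixedMonotone v g) (x : ι → α) (i : ι) :
    Monovary (fun t => f (update x i t)) (fun t => g (update x i t)) := by
  rcases eq_or_ne i v with rfl | hiv
  · have mono {f} (hf : MixedMonotone i f) : Monotone fun t => f (update x i t) :=
      fun t t' htt' => hf (by simpa) fun u hu => by simp [hu]
    exact (mono hf).monovary (mono hg)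
  · have anti {f} (hf : MixedMonotone v f) : Antitone fun t => f (update x i t) :=
      fun t t' htt' => hf (by simp [hiv.symm]) fun u hu => by
        rcases eq_or_ne u i with rfl | hui <;> simp [*]
    exact (anti hf).monovary (anti hg)

variable [MeasurableSpace α] {μ : ι → Measure α}

theorem lmarginal (hf : MixedMonotone v f) (s : Finset ι) :
    MixedMonotone v (∫⋯∫⁻_s, f ∂μ) := by
  intro x y hv hu
  refine lintegral_mono fun z => hf ?_ fun u hne => ?_
  · by_cases hs : v ∈ s <;> simp [updateFinset, hs, hv]
  · by_cases hs : u ∈ s <;> simp [updateFinset, hs, hu u hne]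

variable [∀ i, IsProbabilityMeasure (μ i)]

theorem lmarginal_mul_le (hf : MixedMonotone v f) (hg : MixedMonotone v g) (hfm : Measurable f)
    (hgm : Measurable g) (s : Finset ι) (x : ι → α) :
    (∫⋯∫⁻_s, f ∂μ) x * (∫⋯∫⁻_s, g ∂μ) x ≤ (∫⋯∫⁻_s, f * g ∂μ) x := by
  induction s using Finset.induction_on generalizing x with
  | empty => simp
  | insert i s hi ih =>
    simp only [lmarginal_insert _ hfm hi, lmarginal_insert _ hgm hi,
      lmarginal_insert _ (hfm.mul hgm) hi]
    calc _ ≤ ∫⁻ t, (∫⋯∫⁻_s, f ∂μ) (update x i t) * (∫⋯∫⁻_s, g ∂μ) (update x i t) ∂μ i :=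
          ((hf.lmarginal s).monovary_update (hg.lmarginal s) x i).lintegral_mul_lintegral_le
            ((hfm.lmarginal μ).comp (measurable_update x))
            ((hgm.lmarginal μ).comp (measurable_update x))
      _ ≤ _ := lintegral_mono fun t => ih (update x i t)

variable [Fintype ι]

/-- **Harris inequality** for the product of probability measures on a linear order. -/
theorem lintegral_mul_lintegral_le (hf : MixedMonotone v f) (hg : MixedMonotone v g)
    (hfm : Measurable f) (hgm : Measurable g) :
    (∫⁻ x, f x ∂Measure.pi μ) * ∫⁻ x, g x ∂Measure.pi μ ≤ ∫⁻ x, f x * g x ∂Measure.pi μ := by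
  rcases isEmpty_or_nonempty (ι → α) with hempty | ⟨⟨x⟩⟩
  · simp [lintegral_of_isEmpty]
  simp only [lintegral_eq_lmarginal_univ x]
  exact hf.lmarginal_mul_le hg hfm hgm univ x

theorem prod_lintegral_le {κ : Type*} (T : Finset κ) {f : κ → (ι → α) → ℝ≥0∞}
    (hf : ∀ k ∈ T, MixedMonotone v (f k)) (hfm : ∀ k ∈ T, Measurable (f k)) :
    ∏ k ∈ T, ∫⁻ x, f k x ∂Measure.pi μ ≤ ∫⁻ x, ∏ k ∈ T, f k x ∂Measure.pi μ := by
  classical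
  induction T using Finset.induction_on with
  | empty => simp
  | insert k T hk ih =>
    have hfT := fun j hj => hf j (mem_insert_of_mem hj)
    have hfmT := fun j hj => hfm j (mem_insert_of_mem hj)
    simp only [Finset.prod_insert hk]
    calc _ ≤ (∫⁻ x, f k x ∂Measure.pi μ) * ∫⁻ x, ∏ j ∈ T, f j x ∂Measure.pi μ := by
          gcongr; exact ih hfT hfmT
      _ ≤ _ := lintegral_mul_lintegral_le (hf k (mem_insert_self k T)) (finsetProd T hfT)
          (hfm k (mem_insert_self k T)) (Finset.measurable_prod T hfmT)

end MixedMonotone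

theorem mixedMonotone_indicator_exists_lt {S : Finset ι} (hv : v ∉ S) :
    MixedMonotone v ({x : ι → α | ∃ u ∈ S, x u < x v}.indicator 1) := by
  intro x y hxy hyx
  refine Set.indicator_apply_le' (fun ⟨u, hu, hlt⟩ => ?_) fun _ => zero_le
  rw [Set.indicator_of_mem (show y ∈ {x : ι → α | ∃ u ∈ S, x u < x v} from
    ⟨u, hu, (hyx u (ne_of_mem_of_not_mem hu hv)).trans_lt (hlt.trans_le hxy)⟩)]
  rfl

end Harris

section Conditioning

variable {ι : Type*} [Fintype ι] [DecidableEq ι] {X : ι → Type*} [∀ i, MeasurableSpace (X i)]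
  (μ : ∀ i, Measure (X i)) [∀ i, IsProbabilityMeasure (μ i)]

theorem lintegral_pi_eq_lintegral_update (i : ι) {F : (∀ i, X i) → ℝ≥0∞} (hF : Measurable F) :
    ∫⁻ x, F x ∂Measure.pi μ = ∫⁻ t, ∫⁻ x, F (update x i t) ∂Measure.pi μ ∂μ i := by
  obtain ⟨x⟩ := nonempty_of_isProbabilityMeasure (Measure.pi μ)
  have hFt (t : X i) : Measurable fun y => F (update y i t) := hF.comp measurable_update_left
  have slice (t : X i) : (∫⋯∫⁻_univ.erase i, F ∂μ) (update x i t)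
      = ∫⁻ y, F (update y i t) ∂Measure.pi μ := by
    rw [lmarginal_update_of_notMem hF (notMem_erase i univ), lintegral_eq_lmarginal_univ x,
      lmarginal_erase _ (hFt t) (mem_univ i)]
    simp_rw [lmarginal_update_of_notMem (hFt t) (notMem_erase i univ)]
    simp [Function.comp_def, update_idem]
  rw [lintegral_eq_lmarginal_univ x, lmarginal_erase _ hF (mem_univ i)]
  simp_rw [slice]

theorem measure_pi_eq_lintegral_update (i : ι) {A : Set (∀ i, X i)} (hA : MeasurableSet A) :
    Measure.pi μ A = ∫⁻ t, Measure.pi μ ((fun x : ∀ j, X j => update x i t) ⁻¹' A) ∂μ i := by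
  rw [← lintegral_indicator_one hA,
    lintegral_pi_eq_lintegral_update μ i (measurable_one.indicator hA)]
  congr! with t
  rw [← lintegral_indicator_one (hA.preimage measurable_update_left)]
  rfl

end Conditioning

section Injective

variable {ι α : Type*} [Fintype ι] [DecidableEq ι] [MeasurableSpace α] [MeasurableEq α]
  (μ : ι → Measure α) [∀ i, IsProbabilityMeasure (μ i)] [∀ i, NullSingletonClass (μ i)]

theorem measure_pi_eval_eq_eval {i j : ι} (hij : i ≠ j) : Measure.pi μ {x | x i = x j} = 0 := by
  rw [measure_pi_eq_lintegral_update μ i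
    (measurableSet_eq_fun (measurable_pi_apply i) (measurable_pi_apply j))]
  have hslice (t : α) : (fun x : ι → α => update x i t) ⁻¹' {x | x i = x j} = {x | x j = t} := by
    ext x; simp [update_of_ne hij.symm, eq_comm]
  simp [hslice, Measure.pi_hyperplane]

theorem ae_injective_pi : ∀ᵐ x ∂Measure.pi μ, Injective x := by
  simp only [Injective, ae_all_iff]
  intro i j
  rcases eq_or_ne i j with rfl | hij
  · exact ae_of_all _ fun _ _ => rfl
  · filter_upwards [measure_eq_zero_iff_ae_notMem.mp (measure_pi_eval_eq_eval μ hij)] with x hx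
    exact fun h => absurd h hx

end Injective

theorem measure_pi_forall_mem {ι α : Type*} [Fintype ι] [MeasurableSpace α] (ν : Measure α)
    [IsProbabilityMeasure ν] (S : Finset ι) (B : Set α) :
    Measure.pi (fun _ : ι => ν) {x | ∀ u ∈ S, x u ∈ B} = ν B ^ #S := by
  classical
  have hbox : {x : ι → α | ∀ u ∈ S, x u ∈ B} = Set.univ.pi fun u => if u ∈ S then B else .univ := by
    ext x; simp only [Set.mem_ofPred_eq, Set.mem_univ_pi]
    exact forall_congr' fun u => by split_ifs <;> simp [*]
  rw [hbox, Measure.pi_pi]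
  simp [apply_ite ν, prod_ite_mem]

section Uniform

instance : IsProbabilityMeasure 𝕌 := ⟨by simp⟩

theorem restrict_Icc_apply_Ici {t : ℝ} (ht : t ∈ Set.Icc (0 : ℝ) 1) :
    𝕌 (Set.Ici t) = ENNReal.ofReal (1 - t) := by
  rw [Measure.restrict_apply' measurableSet_Icc, ← Set.Ici_inter_Iic, ← Set.inter_assoc,
    Set.Ici_inter_Ici, Set.Ici_inter_Iic, sup_eq_left.mpr ht.1, Real.volume_Icc]

theorem lintegral_restrict_Icc_Ici_pow (k : ℕ) :
    ∫⁻ t, 𝕌 (Set.Ici t) ^ k ∂𝕌 = ENNReal.ofReal (1 / (k + 1)) := by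
  have hint : IntegrableOn (fun t : ℝ => (1 - t) ^ k) (Set.Icc 0 1) := by
    apply Continuous.integrableOn_Icc; fun_prop
  have hpos : 0 ≤ᵐ[𝕌] fun t : ℝ => (1 - t) ^ k :=
    ae_restrict_of_forall_mem measurableSet_Icc fun t ht => pow_nonneg (by linarith [ht.2]) k
  calc ∫⁻ t, 𝕌 (Set.Ici t) ^ k ∂𝕌 = ∫⁻ t in Set.Icc 0 1, ENNReal.ofReal ((1 - t) ^ k) :=
        setLIntegral_congr_fun measurableSet_Icc fun t ht => by
          rw [restrict_Icc_apply_Ici ht, ENNReal.ofReal_pow (by linarith [ht.2])]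
    _ = ENNReal.ofReal (∫ t in (0 : ℝ)..1, (1 - t) ^ k) := by
        rw [← ofReal_integral_eq_lintegral_ofReal hint hpos, integral_Icc_eq_integral_Ioc,
          intervalIntegral.integral_of_le zero_le_one]
    _ = ENNReal.ofReal (1 / (k + 1)) := by
        simp [intervalIntegral.integral_comp_sub_left fun t => t ^ k]

variable {ι : Type*} [Fintype ι] [DecidableEq ι]

theorem measure_pi_forall_le_of_notMem {v : ι} {S : Finset ι} (hv : v ∉ S) :
    Measure.pi (fun _ : ι => 𝕌) {x | ∀ u ∈ S, x v ≤ x u} = ENNReal.ofReal (1 / (#S + 1)) := by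
  have hslice (t : ℝ) : (fun x : ι → ℝ => update x v t) ⁻¹' {x | ∀ u ∈ S, x v ≤ x u}
      = {x | ∀ u ∈ S, x u ∈ Set.Ici t} := by
    ext x
    simp only [Set.mem_preimage, Set.mem_ofPred_eq, update_self, Set.mem_Ici]
    exact forall₂_congr fun u hu => by rw [update_of_ne (ne_of_mem_of_not_mem hu hv)]
  rw [measure_pi_eq_lintegral_update _ v (by measurability)]
  simp_rw [hslice, measure_pi_forall_mem]
  exact lintegral_restrict_Icc_Ici_pow #S

theorem measure_pi_exists_lt_of_notMem {v : ι} {S : Finset ι} (hv : v ∉ S) :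
    Measure.pi (fun _ : ι => 𝕌) {x | ∃ u ∈ S, x u < x v} = ENNReal.ofReal (#S / (#S + 1)) := by
  have hcompl : {x : ι → ℝ | ∃ u ∈ S, x u < x v} = {x | ∀ u ∈ S, x v ≤ x u}ᶜ := by
    ext x; simp
  rw [hcompl, measure_compl (by measurability) (measure_ne_top _ _),
    measure_pi_forall_le_of_notMem hv, measure_univ, ← ENNReal.ofReal_one,
    ← ENNReal.ofReal_sub _ (by positivity)]
  congr 1
  field_simp
  ring

end Uniform

theorem quarter_le_div_add_one_pow {d : ℕ} (hd : 1 ≤ d) :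
    (1 / 4 : ℝ) ≤ ((d : ℝ) / (d + 1)) ^ (d + 1) := by
  obtain rfl | rfl | hd3 : d = 1 ∨ d = 2 ∨ 3 ≤ d := by omega
  · norm_num
  · norm_num
  have hd0 : (0 : ℝ) < d := by positivity
  have hd3' : (3 : ℝ) ≤ d := by exact_mod_cast hd3
  have hq : (d + 1 : ℝ) / d = 1 + (d : ℝ)⁻¹ := by field_simp
  have hbound : ((d + 1 : ℝ) / d) ^ (d + 1) ≤ 4 := by
    have hinv : (d : ℝ)⁻¹ ≤ 1 / 3 := by rw [inv_le_comm₀ hd0 (by norm_num)]; linarith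
    rw [pow_succ, hq]
    calc (1 + (d : ℝ)⁻¹) ^ d * (1 + (d : ℝ)⁻¹) ≤ Real.exp 1 * (1 + 1 / 3) := by
          gcongr; exact Real.one_add_inv_pow_le_exp
      _ ≤ 4 := by linarith [Real.exp_one_lt_d9]
  calc (1 / 4 : ℝ) ≤ (((d + 1 : ℝ) / d) ^ (d + 1))⁻¹ := by
        rw [one_div]; gcongr
    _ = ((d : ℝ) / (d + 1)) ^ (d + 1) := by rw [← inv_pow, inv_div]

theorem card_mul_le_sum_of_pow_card_le_prod {ι : Type*} {s : Finset ι} {z : ι → ℝ}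
    (hz : ∀ i ∈ s, 0 ≤ z i) {c : ℝ} (hc : 0 ≤ c) (h : c ^ #s ≤ ∏ i ∈ s, z i) :
    #s * c ≤ ∑ i ∈ s, z i := by
  rcases s.eq_empty_or_nonempty with rfl | hs
  · simp
  have hn : (0 : ℝ) < #s := by exact_mod_cast hs.card_pos
  have amgm := Real.geom_mean_le_arith_mean s (fun _ => 1) z (fun _ _ => zero_le_one)
    (by simpa using hn) hz
  simp only [Real.rpow_one, sum_const, nsmul_eq_mul, mul_one, one_mul] at amgm
  calc #s * c = #s * (c ^ #s) ^ (#s : ℝ)⁻¹ := by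
        rw [← Real.rpow_natCast, ← Real.rpow_mul hc, mul_inv_cancel₀ hn.ne', Real.rpow_one]
    _ ≤ #s * ((∑ i ∈ s, z i) / #s) := by
        gcongr
        exact (Real.rpow_le_rpow (by positivity) h (by positivity)).trans amgm
    _ = ∑ i ∈ s, z i := by field_simp

namespace SimpleGraph

variable {V : Type*} [Fintype V] [DecidableEq V] (G : SimpleGraph V) [DecidableRel G.Adj]

def closedNeighborFinset (v : V) : Finset V := insert v (G.neighborFinset v)

theorem mem_closedNeighborFinset_comm {v w : V} :
    w ∈ G.closedNeighborFinset v ↔ v ∈ G.closedNeighborFinset w := by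
  simp only [closedNeighborFinset, mem_insert, mem_neighborFinset, adj_comm, eq_comm]

theorem card_closedNeighborFinset (v : V) : #(G.closedNeighborFinset v) = G.degree v + 1 := by
  rw [closedNeighborFinset, card_insert_of_notMem (G.notMem_neighborFinset_self v),
    card_neighborFinset_eq_degree]

theorem prod_prod_closedNeighborFinset {M : Type*} [CommMonoid M] (f : V → M) :
    ∏ v, ∏ w ∈ G.closedNeighborFinset v, f w = ∏ w, f w ^ (G.degree w + 1) := by
  rw [prod_comm' (t' := univ) (s' := G.closedNeighborFinset) fun v w => by
    simp [G.mem_closedNeighborFinset_comm (v := v)]]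
  simp [card_closedNeighborFinset]

def beatenIn (v w : V) : Set (V → ℝ) := {x | ∃ u ∈ (G.closedNeighborFinset w).erase v, x u < x v}

def notRepresentative (v : V) : Set (V → ℝ) := ⋂ w ∈ G.closedNeighborFinset v, G.beatenIn v w

noncomputable def harrisBound (v : V) : ℝ :=
  ∏ w ∈ G.closedNeighborFinset v, (G.degree w : ℝ) / (G.degree w + 1)

theorem harrisBound_nonneg (v : V) : 0 ≤ G.harrisBound v :=
  prod_nonneg fun _ _ => by positivity

theorem harrisBound_le_one (v : V) : G.harrisBound v ≤ 1 :=
  prod_le_one (fun _ _ => by positivity) fun _ _ => div_le_one_of_le₀ (by linarith) (by positivity)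

theorem card_image_le_sum_indicator (r : V → V) (x : V → ℝ)
    (hr : ∀ v, r v ∈ G.closedNeighborFinset v ∧ ∀ w ∈ G.closedNeighborFinset v, x (r v) ≤ x w) :
    (#(univ.image r) : ℝ≥0∞) ≤ ∑ v, (G.notRepresentative v)ᶜ.indicator 1 x := by
  classical
  have himage : univ.image r ⊆ univ.filter fun v => x ∈ (G.notRepresentative v)ᶜ := by
    intro v hv
    obtain ⟨w, -, rfl⟩ := mem_image.mp hv
    simp only [notRepresentative, beatenIn, mem_filter, mem_univ, true_and, Set.mem_compl_iff,
      Set.mem_iInter, not_forall]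
    exact ⟨w, G.mem_closedNeighborFinset_comm.mp (hr w).1,
      fun ⟨u, hu, hlt⟩ => hlt.not_ge ((hr w).2 u (mem_of_mem_erase hu))⟩
  calc (#(univ.image r) : ℝ≥0∞) ≤ #(univ.filter fun v => x ∈ (G.notRepresentative v)ᶜ) := by
        exact_mod_cast card_le_card himage
    _ = ∑ v, (G.notRepresentative v)ᶜ.indicator 1 x := by
        simp [card_filter, Set.indicator_apply]

theorem measurableSet_beatenIn (v w : V) : MeasurableSet (G.beatenIn v w) := by
  unfold beatenIn; measurability

theorem measurableSet_notRepresentative (v : V) : MeasurableSet (G.notRepresentative v) :=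
  .biInter (countable_toSet _) fun w _ => G.measurableSet_beatenIn v w

theorem le_measure_notRepresentative (v : V) :
    ENNReal.ofReal (G.harrisBound v) ≤ Measure.pi (fun _ : V => 𝕌) (G.notRepresentative v) := by
  have hnot (w : V) : v ∉ (G.closedNeighborFinset w).erase v := notMem_erase v _
  calc _ = ∏ w ∈ G.closedNeighborFinset v,
        ∫⁻ x, (G.beatenIn v w).indicator 1 x ∂Measure.pi (fun _ : V => 𝕌) := by
        rw [harrisBound, ENNReal.ofReal_prod_of_nonneg fun w _ => by positivity]
        refine prod_congr rfl fun w hw => ?_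
        rw [lintegral_indicator_one (G.measurableSet_beatenIn v w), beatenIn,
          measure_pi_exists_lt_of_notMem (hnot w),
          card_erase_of_mem (G.mem_closedNeighborFinset_comm.mp hw), card_closedNeighborFinset]
        simp
    _ ≤ ∫⁻ x, ∏ w ∈ G.closedNeighborFinset v, (G.beatenIn v w).indicator 1 x
          ∂Measure.pi (fun _ : V => 𝕌) :=
        MixedMonotone.prod_lintegral_le _ (fun w _ => mixedMonotone_indicator_exists_lt (hnot w))
          fun w _ => measurable_one.indicator (G.measurableSet_beatenIn v w)
    _ = Measure.pi (fun _ : V => 𝕌) (G.notRepresentative v) := by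
        rw [← lintegral_indicator_one (G.measurableSet_notRepresentative v)]
        congr! with x
        classical
        simp only [notRepresentative, Set.indicator_apply, Set.mem_iInter₂, Pi.one_apply]
        rw [prod_boole]
        congr

theorem measure_compl_notRepresentative_le (v : V) :
    Measure.pi (fun _ : V => 𝕌) (G.notRepresentative v)ᶜ ≤
      ENNReal.ofReal (1 - G.harrisBound v) := by
  rw [measure_compl (G.measurableSet_notRepresentative v) (measure_ne_top _ _), measure_univ,
    ENNReal.ofReal_sub _ (G.harrisBound_nonneg v), ENNReal.ofReal_one]
  exact tsub_le_tsub_left (G.le_measure_notRepresentative v) 1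

theorem sum_one_sub_harrisBound_le (hG : ∀ v, ∃ w, G.Adj v w) :
    ∑ v, (1 - G.harrisBound v) ≤ 3 / 4 * Fintype.card V := by
  have hprod : (1 / 4 : ℝ) ^ #(univ : Finset V) ≤ ∏ v, G.harrisBound v := by
    unfold harrisBound
    rw [prod_prod_closedNeighborFinset, ← prod_const]
    exact prod_le_prod (fun _ _ => by norm_num) fun w _ =>
      quarter_le_div_add_one_pow ((G.degree_pos_iff_exists_adj w).mpr (hG w))
  have hsum := card_mul_le_sum_of_pow_card_le_prod (fun v _ => G.harrisBound_nonneg v)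
    (by norm_num) hprod
  rw [card_univ] at hsum
  rw [sum_sub_distrib, sum_const, card_univ, nsmul_one]
  linarith

theorem sum_measure_compl_notRepresentative_le (hG : ∀ v, ∃ w, G.Adj v w) :
    ∑ v, Measure.pi (fun _ : V => 𝕌) (G.notRepresentative v)ᶜ ≤ 3 / 4 * Fintype.card V :=
  calc _ ≤ ∑ v, ENNReal.ofReal (1 - G.harrisBound v) :=
        sum_le_sum fun v _ => G.measure_compl_notRepresentative_le v
    _ = ENNReal.ofReal (∑ v, (1 - G.harrisBound v)) :=
        (ENNReal.ofReal_sum_of_nonneg fun v _ => sub_nonneg.mpr (G.harrisBound_le_one v)).symm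
    _ ≤ ENNReal.ofReal (3 / 4 * Fintype.card V) :=
        ENNReal.ofReal_le_ofReal (G.sum_one_sub_harrisBound_le hG)
    _ = 3 / 4 * Fintype.card V := by
        rw [ENNReal.ofReal_mul (by norm_num), ENNReal.ofReal_natCast,
          ENNReal.ofReal_div_of_pos (by norm_num)]
        norm_num

end SimpleGraph

theorem stmt_0_general {V : Type*} [Fintype V] [DecidableEq V]
    (G : SimpleGraph V) [DecidableRel G.Adj]
    (hiso : ∀ v : V, ∃ w, G.Adj v w)
    (r : (V → ℝ) → V → V)
    (hr : ∀ h : V → ℝ, Function.Injective h → ∀ v : V,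
      r h v ∈ insert v (G.neighborFinset v) ∧
      ∀ w ∈ insert v (G.neighborFinset v), h (r h v) ≤ h w) :
    ∫⁻ h : V → ℝ, ((Finset.univ.image (r h)).card : ENNReal)
        ∂(Measure.pi fun _ : V => volume.restrict (Set.Icc (0 : ℝ) 1)) ≤
      (3 / 4 : ENNReal) * (Fintype.card V : ENNReal) := by
  calc _ ≤ ∫⁻ x, ∑ v, (G.notRepresentative v)ᶜ.indicator 1 x ∂Measure.pi (fun _ : V => 𝕌) :=
        lintegral_mono_ae <| (ae_injective_pi _).mono fun x hx =>
          G.card_image_le_sum_indicator (r x) x (hr x hx)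
    _ = ∑ v, Measure.pi (fun _ : V => 𝕌) (G.notRepresentative v)ᶜ := by
        rw [lintegral_finsetSum _ fun v _ =>
          measurable_one.indicator (G.measurableSet_notRepresentative v).compl]
        simp_rw [lintegral_indicator_one (G.measurableSet_notRepresentative _).compl]
    _ ≤ 3 / 4 * Fintype.card V := G.sum_measure_compl_notRepresentative_le hiso

/-- For a finite graph without isolated vertices and i.i.d. uniform labels
`h : V → [0,1]` (modelled by the product of uniform measures on `[0,1]`), if for every
injective labelling `h` the map `r h` picks the vertex of minimum label in each closed
neighbourhood, then the expected number of vertices in the image of `r h` is at most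
`(3/4)|V|`. -/
theorem stmt_0 {V : Type*} [Fintype V] [DecidableEq V] [Nonempty V]
    (G : SimpleGraph V) [DecidableRel G.Adj]
    (hiso : ∀ v : V, ∃ w, G.Adj v w)
    (r : (V → ℝ) → V → V)
    (hr : ∀ h : V → ℝ, Function.Injective h → ∀ v : V,
      r h v ∈ insert v (G.neighborFinset v) ∧
      ∀ w ∈ insert v (G.neighborFinset v), h (r h v) ≤ h w) :
    ∫⁻ h : V → ℝ, ((Finset.univ.image (r h)).card : ENNReal)
        ∂(Measure.pi fun _ : V => volume.restrict (Set.Icc (0 : ℝ) 1)) ≤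
      (3 / 4 : ENNReal) * (Fintype.card V : ENNReal) :=
  stmt_0_general G hiso r hr
end

section
/- Let G = (V, E) be a finite undirected graph without isolated vertices, and let L : V → {1, …, |V|} be a labelling chosen uniformly at random among all bijections. Define r(v) = argmin over w in N[v] of L(w). Then the expected number of vertices in the image of r is at most (2/3)|V|. -/
/-!
Fix a neighbour `w` of `u`. If `u = r L v`, then either `L u < L w`, which holds for exactly half
of the labellings, or `w` precedes `u` while `u` has the least label in `N[v]`; then `v ≠ u` is a
neighbour of `u`, `w ∉ N[v]`, and `w, u` carry the two smallest labels of the `deg v + 2`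
element set `N[v] ∪ {w}`, which has probability `1 / ((deg v + 2)(deg v + 1))`. Summing over `u`
and exchanging the sums, the second contribution totals `∑ v, deg v / ((deg v + 2)(deg v + 1))`,
and `d / ((d + 2)(d + 1)) ≤ 1/6` for every `d`, so the expectation is at most `|V|/2 + |V|/6`.
-/

open Finset

theorem Finset.sum_card_eq_sum_card_filter_mem {ι α : Type*} [Fintype α] [DecidableEq α]
    (s : Finset ι) (t : ι → Finset α) :
    ∑ i ∈ s, #(t i) = ∑ a, #{i ∈ s | a ∈ t i} := by
  simpa [bipartiteAbove, bipartiteBelow, filter_mem_eq_inter] using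
    sum_card_bipartiteAbove_eq_sum_card_bipartiteBelow (fun i a => a ∈ t i) (s := s) (t := univ)

theorem Equiv.swap_apply_mem_iff {α : Type*} [DecidableEq α] {s : Finset α} {x y z : α}
    (hx : x ∈ s) (hy : y ∈ s) : Equiv.swap x y z ∈ s ↔ z ∈ s := by
  rw [Equiv.swap_apply_def]
  split_ifs <;> simp_all

theorem Finset.exists_perm_apply_mem_iff_and_apply_eq {α : Type*} [DecidableEq α]
    {s : Finset α} {p q a b : α} (hp : p ∈ s) (hq : q ∈ s) (ha : a ∈ s) (hb : b ∈ s)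
    (hpq : p ≠ q) (hab : a ≠ b) :
    ∃ σ : Equiv.Perm α, (∀ z, σ z ∈ s ↔ z ∈ s) ∧ σ p = a ∧ σ q = b := by
  set q' := Equiv.swap p a q
  have hq' : q' ≠ a := by
    rw [← Equiv.swap_apply_left p a]
    exact (Equiv.swap p a).injective.ne hpq.symm
  refine ⟨(Equiv.swap p a).trans (Equiv.swap q' b), fun z => ?_, ?_, ?_⟩
  · simp only [Equiv.trans_apply]
    rw [Equiv.swap_apply_mem_iff ((Equiv.swap_apply_mem_iff hp ha).2 hq) hb,
      Equiv.swap_apply_mem_iff hp ha]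
  · simp [Equiv.swap_apply_of_ne_of_ne hq'.symm hab]
  · simp [q']

theorem SimpleGraph.sum_sum_neighborFinset {V M : Type*} [Fintype V] [AddCommMonoid M]
    (G : SimpleGraph V) [DecidableRel G.Adj] (f : V → M) :
    ∑ u, ∑ v ∈ G.neighborFinset u, f v = ∑ v, G.degree v • f v := by
  rw [sum_comm' (t' := univ) (s' := fun v => G.neighborFinset v)
    fun u v => by simp [G.adj_comm]]
  simp [card_neighborFinset_eq_degree]

section Labelling

variable {V β : Type*} [LinearOrder β]

theorem eq_and_eq_of_bottomTwo {L : V ≃ β} {S : Finset V} {p q p' q' : V}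
    (hp : p ∈ S) (hq : q ∈ S) (hp' : p' ∈ S) (hq' : q' ∈ S)
    (h : L p < L q ∧ ∀ y ∈ S, y ≠ p → L q ≤ L y)
    (h' : L p' < L q' ∧ ∀ y ∈ S, y ≠ p' → L q' ≤ L y) : p = p' ∧ q = q' := by
  obtain ⟨hpq, hmin⟩ := h
  obtain ⟨hpq', hmin'⟩ := h'
  have hpp' : p = p' := by
    by_contra hne
    have := hmin p' hp' (Ne.symm hne)
    have := hmin' p hp hne
    exact lt_irrefl (L p) (by order)
  subst hpp'
  refine ⟨rfl, L.injective (le_antisymm ?_ ?_)⟩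
  · exact hmin q' hq' (by rintro rfl; exact lt_irrefl _ hpq')
  · exact hmin' q hq (by rintro rfl; exact lt_irrefl _ hpq)

variable [Fintype V] [DecidableEq V] [Fintype β]

theorem card_filter_lt_eq_card_filter_gt (u w : V) :
    #{L : V ≃ β | L u < L w} = #{L : V ≃ β | L w < L u} := by
  refine card_nbij' (fun L => (Equiv.swap u w).trans L) (fun L => (Equiv.swap u w).trans L)
    ?_ ?_ ?_ ?_ <;> intro L <;> simp [Equiv.swap_apply_left, Equiv.swap_apply_right] <;>
    intro _ <;> ext <;> simp

theorem two_mul_card_filter_lt_le (u w : V) :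
    2 * #{L : V ≃ β | L u < L w} ≤ Fintype.card (V ≃ β) := by
  calc 2 * #{L : V ≃ β | L u < L w}
      = #{L : V ≃ β | L u < L w} + #{L : V ≃ β | L w < L u} := by
        rw [two_mul, card_filter_lt_eq_card_filter_gt]
    _ ≤ #{L : V ≃ β | L u < L w} + #{L : V ≃ β | ¬ L u < L w} := by
        gcongr with L
        exact not_lt_of_gt
    _ = Fintype.card (V ≃ β) := card_filter_add_card_filter_not _

theorem card_filter_bottomTwo_eq_of_perm {S : Finset V} {σ : Equiv.Perm V}
    (hσ : ∀ z, σ z ∈ S ↔ z ∈ S) (p q : V) :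
    #{L : V ≃ β | L p < L q ∧ ∀ y ∈ S, y ≠ p → L q ≤ L y} =
      #{L : V ≃ β | L (σ p) < L (σ q) ∧ ∀ y ∈ S, y ≠ σ p → L (σ q) ≤ L y} := by
  refine card_nbij' (fun L => σ.symm.trans L) (fun L => σ.trans L) ?_ ?_ ?_ ?_
  · intro L hL
    simp only [coe_filter, mem_univ, true_and, Set.mem_ofPred_eq, Equiv.trans_apply,
      Equiv.symm_apply_apply] at hL ⊢
    refine ⟨hL.1, fun y hy hyp => ?_⟩
    simpa using hL.2 (σ.symm y) ((hσ _).1 (by simpa using hy)) (by rintro rfl; simp at hyp)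
  · intro L hL
    simp only [coe_filter, mem_univ, true_and, Set.mem_ofPred_eq, Equiv.trans_apply] at hL ⊢
    exact ⟨hL.1, fun y hy hyp => hL.2 (σ y) ((hσ y).2 hy) (σ.injective.ne hyp)⟩
  · intro L _; ext; simp
  · intro L _; ext; simp

/-- Every ordered pair of distinct elements of `S` is equally likely to carry the two smallest
labels of `S`. -/
theorem card_filter_bottomTwo_mul_card_offDiag_le {S : Finset V} {a b : V} (ha : a ∈ S)
    (hb : b ∈ S) (hab : a ≠ b) :
    #{L : V ≃ β | L a < L b ∧ ∀ y ∈ S, y ≠ a → L b ≤ L y} * #S.offDiag ≤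
      Fintype.card (V ≃ β) := by
  set E : V × V → Finset (V ≃ β) :=
    fun x => {L | L x.1 < L x.2 ∧ ∀ y ∈ S, y ≠ x.1 → L x.2 ≤ L y}
  have hE : ∀ x ∈ S.offDiag, #(E x) = #(E (a, b)) := by
    rintro ⟨p, q⟩ hx
    obtain ⟨hp, hq, hpq⟩ := mem_offDiag.1 hx
    obtain ⟨σ, hσ, rfl, rfl⟩ := exists_perm_apply_mem_iff_and_apply_eq hp hq ha hb hpq hab
    exact card_filter_bottomTwo_eq_of_perm hσ p q
  have hdisj : (S.offDiag : Set (V × V)).PairwiseDisjoint E := by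
    rintro ⟨p, q⟩ hx ⟨p', q'⟩ hx' hne
    obtain ⟨hp, hq, -⟩ := mem_offDiag.1 hx
    obtain ⟨hp', hq', -⟩ := mem_offDiag.1 hx'
    refine disjoint_left.2 fun L hL hL' => hne ?_
    obtain ⟨rfl, rfl⟩ :=
      eq_and_eq_of_bottomTwo hp hq hp' hq' (mem_filter.1 hL).2 (mem_filter.1 hL').2
    rfl
  calc #(E (a, b)) * #S.offDiag = ∑ x ∈ S.offDiag, #(E x) := by
        rw [sum_congr rfl hE, sum_const, smul_eq_mul, mul_comm]
    _ = #(S.offDiag.biUnion E) := (card_biUnion hdisj).symm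
    _ ≤ Fintype.card (V ≃ β) := card_le_univ _

end Labelling

namespace SimpleGraph

variable {V β : Type*} [Fintype V] [DecidableEq V] [LinearOrder β]
  (G : SimpleGraph V) [DecidableRel G.Adj]

theorem adj_of_forall_closedNbhd_le {L : V → β} {u v w : V}
    (hu : u ∈ insert v (G.neighborFinset v))
    (hmin : ∀ y ∈ insert v (G.neighborFinset v), L u ≤ L y)
    (huw : G.Adj u w) (hwu : L w < L u) : G.Adj u v := by
  rcases eq_or_ne u v with rfl | huv
  · exact absurd (hmin w (mem_insert_of_mem ((G.mem_neighborFinset u w).2 huw))) hwu.not_ge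
  · exact ((G.mem_neighborFinset v u).1 (mem_of_mem_insert_of_ne hu huv)).symm

variable [Fintype β]

theorem card_filter_lt_and_forall_closedNbhd_le_mul_le {u v : V}
    (hu : u ∈ insert v (G.neighborFinset v)) (w : V) :
    #{L : V ≃ β | L w < L u ∧ ∀ y ∈ insert v (G.neighborFinset v), L u ≤ L y} *
        ((G.degree v + 2) * (G.degree v + 1)) ≤ Fintype.card (V ≃ β) := by
  by_cases hw : w ∈ insert v (G.neighborFinset v)
  · rw [filter_false_of_mem fun L _ h => (h.2 w hw).not_gt h.1]
    simp
  have hS : #(insert w (insert v (G.neighborFinset v))).offDiag =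
      (G.degree v + 2) * (G.degree v + 1) := by
    rw [offDiag_card, card_insert_of_notMem hw,
      card_insert_of_notMem (G.notMem_neighborFinset_self v), card_neighborFinset_eq_degree]
    exact Nat.sub_eq_of_eq_add (by ring)
  rw [← hS]
  refine le_trans (Nat.mul_le_mul_right _ (card_le_card (monotone_filter_right _ ?_)))
    (card_filter_bottomTwo_mul_card_offDiag_le (mem_insert_self w _) (mem_insert_of_mem hu)
      (by rintro rfl; exact hw hu))
  exact fun L _ h => ⟨h.1, fun y hy hyw => h.2 y (mem_of_mem_insert_of_ne hy hyw)⟩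

theorem card_filter_mem_image_le (r : (V ≃ β) → V → V)
    (hr : ∀ L v, r L v ∈ insert v (G.neighborFinset v) ∧
      ∀ y ∈ insert v (G.neighborFinset v), L (r L v) ≤ L y) {u w : V} (huw : G.Adj u w) :
    #{L : V ≃ β | u ∈ univ.image (r L)} ≤ #{L : V ≃ β | L u < L w} +
      ∑ v ∈ G.neighborFinset u,
        #{L : V ≃ β | L w < L u ∧ ∀ y ∈ insert v (G.neighborFinset v), L u ≤ L y} := by
  refine (card_le_card fun L hL => ?_).trans ((card_union_le _ _).trans
    (Nat.add_le_add_left card_biUnion_le _))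
  obtain ⟨v, -, rfl⟩ := mem_image.1 (mem_filter.1 hL).2
  obtain ⟨hv, hmin⟩ := hr L v
  rcases lt_or_gt_of_ne (L.injective.ne huw.ne) with hlt | hgt
  · exact mem_union_left _ (mem_filter.2 ⟨mem_univ _, hlt⟩)
  · refine mem_union_right _ (mem_biUnion.2 ⟨v, ?_, mem_filter.2 ⟨mem_univ _, hgt, hmin⟩⟩)
    exact (G.mem_neighborFinset _ _).2 (G.adj_of_forall_closedNbhd_le hv hmin huw hgt)

theorem card_filter_mem_image_le_div (r : (V ≃ β) → V → V)
    (hr : ∀ L v, r L v ∈ insert v (G.neighborFinset v) ∧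
      ∀ y ∈ insert v (G.neighborFinset v), L (r L v) ≤ L y) {u w : V} (huw : G.Adj u w) :
    (#{L : V ≃ β | u ∈ univ.image (r L)} : ℚ) ≤ Fintype.card (V ≃ β) / 2 +
      ∑ v ∈ G.neighborFinset u,
        Fintype.card (V ≃ β) / ((G.degree v + 2) * (G.degree v + 1) : ℚ) := by
  have hA : (#{L : V ≃ β | L u < L w} : ℚ) ≤ Fintype.card (V ≃ β) / 2 := by
    rw [le_div_iff₀ two_pos, mul_comm]
    exact_mod_cast two_mul_card_filter_lt_le u w
  have hB : ∀ v ∈ G.neighborFinset u,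
      (#{L : V ≃ β | L w < L u ∧ ∀ y ∈ insert v (G.neighborFinset v), L u ≤ L y} : ℚ) ≤
        Fintype.card (V ≃ β) / ((G.degree v + 2) * (G.degree v + 1) : ℚ) := fun v hv => by
    have hu : u ∈ insert v (G.neighborFinset v) :=
      mem_insert_of_mem ((G.mem_neighborFinset _ _).2 ((G.mem_neighborFinset _ _).1 hv).symm)
    rw [le_div_iff₀ (by positivity)]
    exact_mod_cast G.card_filter_lt_and_forall_closedNbhd_le_mul_le hu w
  calc (#{L : V ≃ β | u ∈ univ.image (r L)} : ℚ)
      ≤ #{L : V ≃ β | L u < L w} + ∑ v ∈ G.neighborFinset u,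
          (#{L : V ≃ β | L w < L u ∧ ∀ y ∈ insert v (G.neighborFinset v), L u ≤ L y} : ℚ) := by
        exact_mod_cast G.card_filter_mem_image_le r hr huw
    _ ≤ _ := add_le_add hA (sum_le_sum hB)

end SimpleGraph

/-- For a finite graph without isolated vertices and a uniformly random bijective
labelling `L : V ≃ Fin |V|`, with `r L v` the vertex of minimum label in the closed
neighbourhood `N[v]`, the expected number of vertices in the image of `r L` is at
most `(2/3)|V|`. -/
theorem stmt_1 {V : Type*} [Fintype V] [DecidableEq V]
    (G : SimpleGraph V) [DecidableRel G.Adj]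
    (hiso : ∀ v : V, ∃ w, G.Adj v w)
    (r : (V ≃ Fin (Fintype.card V)) → V → V)
    (hr : ∀ L : V ≃ Fin (Fintype.card V), ∀ v : V,
      r L v ∈ insert v (G.neighborFinset v) ∧
      ∀ w ∈ insert v (G.neighborFinset v), L (r L v) ≤ L w) :
    (∑ L : V ≃ Fin (Fintype.card V), ((Finset.univ.image (r L)).card : ℚ)) /
        (Fintype.card (V ≃ Fin (Fintype.card V)) : ℚ) ≤
      (2 / 3 : ℚ) * (Fintype.card V : ℚ) := by
  choose w hw using hiso
  set Q : ℚ := (Fintype.card (V ≃ Fin (Fintype.card V)) : ℚ)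
  have hQ : 0 < Q := Nat.cast_pos.2 (Fintype.card_pos_iff.2 ⟨Fintype.equivFin V⟩)
  have hdeg (d : ℕ) : d • (Q / ((d + 2) * (d + 1))) ≤ Q / 6 := by
    rw [nsmul_eq_mul, ← mul_div_assoc, div_le_div_iff₀ (by positivity) (by norm_num)]
    have : (6 * d : ℚ) ≤ (d + 2) * (d + 1) := by
      rcases d with _ | _ | d <;> push_cast <;> nlinarith
    nlinarith
  rw [div_le_iff₀ hQ, ← Nat.cast_sum, sum_card_eq_sum_card_filter_mem, Nat.cast_sum]
  calc ∑ u, (#{L : V ≃ Fin (Fintype.card V) | u ∈ univ.image (r L)} : ℚ)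
      ≤ ∑ u, (Q / 2 + ∑ v ∈ G.neighborFinset u, Q / ((G.degree v + 2) * (G.degree v + 1))) :=
        sum_le_sum fun u _ => G.card_filter_mem_image_le_div r hr (hw u)
    _ = Fintype.card V * (Q / 2) +
          ∑ v, G.degree v • (Q / ((G.degree v + 2) * (G.degree v + 1))) := by
        rw [sum_add_distrib, G.sum_sum_neighborFinset, sum_const, card_univ, nsmul_eq_mul]
    _ ≤ Fintype.card V * (Q / 2) + ∑ _v : V, Q / 6 := by gcongr with v; exact hdeg _
    _ = 2 / 3 * Fintype.card V * Q := by rw [sum_const, card_univ, nsmul_eq_mul]; ring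
end

section
/- Let G = (V, E) be a finite undirected graph and r : V → V a map with r(v) ∈ N[v] for all v (each vertex's representative lies in its closed neighbourhood). Define the contracted graph G' on vertex set r(V) with edges {(r(v), r(w)) : (v,w) ∈ E, r(v) ≠ r(w)}. Then two vertices u, v ∈ V lie in the same connected component of G if and only if r(u) and r(v) lie in the same connected component of G'. -/
/-! Every edge of `G` becomes an edge or a loop of the contraction, so `r` carries walks of `G`
to walks of `G'`. Conversely an edge `r x – r y` of `G'` lifts to the path `r x – x – y – r y`
of `G`, since `r` moves each vertex at most one step. -/

/-- The contracted graph `G'`: vertices are the representatives and an edge joins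
`r v` and `r w` whenever `(v, w)` is an edge of `G` with `r v ≠ r w`. -/
def contractedGraph {V : Type*} (G : SimpleGraph V) (r : V → V) : SimpleGraph V where
  Adj a b := a ≠ b ∧ ∃ v w : V, G.Adj v w ∧ r v = a ∧ r w = b
  symm := ⟨by
    rintro a b ⟨hab, v, w, hvw, hv, hw⟩
    exact ⟨hab.symm, w, v, hvw.symm, hw, hv⟩⟩
  loopless := ⟨by rintro a ⟨h, -⟩; exact h rfl⟩

namespace SimpleGraph

variable {V V' : Type*} {G : SimpleGraph V} {G' : SimpleGraph V'}

theorem Reachable.lift (f : V → V') (hf : ∀ ⦃a b⦄, G.Adj a b → G'.Reachable (f a) (f b))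
    {u v : V} (h : G.Reachable u v) : G'.Reachable (f u) (f v) := by
  rw [reachable_iff_reflTransGen] at h ⊢
  refine Relation.ReflTransGen.lift' f (fun a b hab => ?_) u v h
  exact (reachable_iff_reflTransGen _ _).mp (hf hab)

theorem Reachable.contractedGraph (r : V → V) {u v : V} (h : G.Reachable u v) :
    (_root_.contractedGraph G r).Reachable (r u) (r v) := by
  refine h.lift r fun a b hab => ?_
  by_cases hr : r a = r b
  · rw [hr]
  · exact Adj.reachable ⟨hr, a, b, hab, rfl, rfl⟩

theorem Reachable.of_contractedGraph {r : V → V} (hr : ∀ v, G.Reachable v (r v)) {a b : V}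
    (h : (_root_.contractedGraph G r).Reachable a b) : G.Reachable a b := by
  refine h.lift (G' := G) id fun _ _ hab => ?_
  obtain ⟨-, x, y, hxy, rfl, rfl⟩ := hab
  exact ((hr x).symm.trans hxy.reachable).trans (hr y)

end SimpleGraph

theorem stmt_8_general {V : Type*} (G : SimpleGraph V) (r : V → V)
    (hr : ∀ v : V, r v = v ∨ G.Adj v (r v)) :
    ∀ u v : V, G.Reachable u v ↔ (contractedGraph G r).Reachable (r u) (r v) := by
  have hvr : ∀ v, G.Reachable v (r v) := fun v =>
    (hr v).elim (fun h => by rw [h]) SimpleGraph.Adj.reachable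
  exact fun u v => ⟨(·.contractedGraph r),
    fun h => ((hvr u).trans (.of_contractedGraph hvr h)).trans (hvr v).symm⟩

/-- One contraction step preserves connectivity: if every vertex's representative lies
in its closed neighbourhood, then `u` and `v` lie in the same connected component of
`G` iff `r u` and `r v` lie in the same connected component of the contracted graph. -/
theorem stmt_8 {V : Type*} [Fintype V] (G : SimpleGraph V) (r : V → V)
    (hr : ∀ v : V, r v = v ∨ G.Adj v (r v)) :
    ∀ u v : V, G.Reachable u v ↔ (contractedGraph G r).Reachable (r u) (r v) :=
  stmt_8_general G r hr
end
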